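/- arXiv:1301.1256 — 2 statements merged into one kernel-verified Lean document; each statement's English description precedes it below -/
import Mathlib

section
/- Let ḡ be a graphon taking only the values 0 and 1 almost everywhere, with t(ḡ) = 0 and e(ḡ) = 1/2. Then ḡ is equivalent to the graphon b defined by b(x,y) = 1 if x < 1/2 < y or y < 1/2 < x, and b(x,y) = 0 otherwise. -/
open MeasureTheory Real Set Filter

noncomputable section

/-- `I₀(u) = (1/2)[u ln u + (1-u) ln(1-u)]`, with the convention `log 0 = 0`
    giving `I₀(0) = I₀(1) = 0`. -/
def I0 (u : ℝ) : ℝ := (u * Real.log u + (1 - u) * Real.log (1 - u)) / 2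

/-- `I₀'(u) = (1/2)[ln u − ln(1−u)]`. -/
def I0d (u : ℝ) : ℝ := (Real.log u - Real.log (1 - u)) / 2

/-- `I₀''(u) = (1/2)[1/u + 1/(1−u)]`. -/
def I0dd (u : ℝ) : ℝ := (1 / u + 1 / (1 - u)) / 2

/-- A graphon: a measurable, symmetric function `[0,1]² → [0,1]`
    (here defined on all of `ℝ²`, with values used only on `[0,1]²`). -/
def IsGraphon (g : ℝ → ℝ → ℝ) : Prop :=
  Measurable (Function.uncurry g) ∧ (∀ x y, g x y = g y x) ∧ ∀ x y, g x y ∈ Icc (0 : ℝ) 1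

/-- The edge density `e(g) = ∫₀¹∫₀¹ g(x,y) dx dy`. -/
def edgeDensity (g : ℝ → ℝ → ℝ) : ℝ :=
  ∫ x in Icc (0 : ℝ) 1, ∫ y in Icc (0 : ℝ) 1, g x y

/-- The triangle density `t(g) = ∫₀¹∫₀¹∫₀¹ g(x,y) g(y,z) g(z,x) dx dy dz`. -/
def triangleDensity (g : ℝ → ℝ → ℝ) : ℝ :=
  ∫ x in Icc (0 : ℝ) 1, ∫ y in Icc (0 : ℝ) 1, ∫ z in Icc (0 : ℝ) 1, g x y * g y z * g z x

/-- The rate function `I(g) = ∫₀¹∫₀¹ I₀(g(x,y)) dx dy`. -/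
def rate (g : ℝ → ℝ → ℝ) : ℝ :=
  ∫ x in Icc (0 : ℝ) 1, ∫ y in Icc (0 : ℝ) 1, I0 (g x y)

/-- Lebesgue measure restricted to `[0,1]`. -/
def unitMeasure : Measure ℝ := volume.restrict (Icc (0 : ℝ) 1)

/-- Two graphons are equivalent if they agree a.e. after composing with
    measure-preserving maps of `[0,1]`. -/
def GraphonEquiv (f g : ℝ → ℝ → ℝ) : Prop :=
  ∃ σ σ' : ℝ → ℝ, MeasurePreserving σ unitMeasure unitMeasure ∧
    MeasurePreserving σ' unitMeasure unitMeasure ∧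
    ∀ᵐ p ∂(unitMeasure.prod unitMeasure), f (σ p.1) (σ p.2) = g (σ' p.1) (σ' p.2)

end

/-- The complete balanced bipartite graphon. -/
noncomputable def bipOne : ℝ → ℝ → ℝ := fun x y =>
  if (x < 1 / 2 ∧ 1 / 2 < y) ∨ (y < 1 / 2 ∧ 1 / 2 < x) then 1 else 0

/-!
In a triangle-free graphon the neighbourhoods of adjacent vertices are almost disjoint, so
`d x + d y ≤ 1` along almost every edge `xy`, where `d` is the degree function. Integrating this
over the edges gives `2 ∫ d² ≤ ∫ d = 1/2`, hence `∫ d² ≤ (∫ d)²`: the degree has zero variance,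
so `d = 1/2` almost everywhere. Then along almost every edge the two neighbourhoods are
complementary, so the neighbourhood `A` of a typical vertex has measure `1/2` and every row
through `A` is the indicator of `Aᶜ`. Hence the graphon dominates the complete bipartite graphon
on `A, Aᶜ`, and since both have edge density `1/2` they agree almost everywhere. Finally, the
cumulative volume functions of `A` and of its complement rearrange `[0,1]`, preserving measure,
so that `A` is sent below `1/2` and its complement above.
-/

open ProbabilityTheory Function

section CompleteBipartite

variable {α : Type*}

noncomputable def completeBipartite (A : Set α) (x y : α) : ℝ :=
  (A ×ˢ Aᶜ ∪ Aᶜ ×ˢ A).indicator 1 (x, y)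

variable {A : Set α} {x y : α}

lemma completeBipartite_comm (A : Set α) (x y : α) :
    completeBipartite A x y = completeBipartite A y x := by
  by_cases hx : x ∈ A <;> by_cases hy : y ∈ A <;> simp [completeBipartite, hx, hy]

lemma completeBipartite_of_mem (hx : x ∈ A) :
    completeBipartite A x y = 1 - A.indicator 1 y := by
  by_cases hy : y ∈ A <;> simp [completeBipartite, hx, hy]

lemma completeBipartite_of_notMem_of_notMem (hx : x ∉ A) (hy : y ∉ A) :
    completeBipartite A x y = 0 := by
  simp [completeBipartite, hx, hy]

lemma completeBipartite_mem_Icc (A : Set α) (x y : α) :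
    completeBipartite A x y ∈ Icc (0 : ℝ) 1 := by
  by_cases hx : x ∈ A <;> by_cases hy : y ∈ A <;> simp [completeBipartite, hx, hy]

variable [MeasurableSpace α]

lemma measurable_completeBipartite (hA : MeasurableSet A) :
    Measurable fun q : α × α => completeBipartite A q.1 q.2 :=
  measurable_one.indicator ((hA.prod hA.compl).union (hA.compl.prod hA))

lemma integral_completeBipartite {μ : Measure α} [IsProbabilityMeasure μ]
    (hA : MeasurableSet A) :
    ∫ q, completeBipartite A q.1 q.2 ∂μ.prod μ = 2 * μ.real A * (1 - μ.real A) := by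
  have hdisj : Disjoint (A ×ˢ Aᶜ) (Aᶜ ×ˢ A) :=
    disjoint_left.2 fun q h₁ h₂ => h₂.1 h₁.1
  rw [show (fun q : α × α => completeBipartite A q.1 q.2) = (A ×ˢ Aᶜ ∪ Aᶜ ×ˢ A).indicator 1
      from rfl, integral_indicator_one ((hA.prod hA.compl).union (hA.compl.prod hA)),
    measureReal_union hdisj (hA.compl.prod hA), measureReal_prod_prod, measureReal_prod_prod,
    probReal_compl_eq_one_sub hA]
  ring

end CompleteBipartite

section GraphonKernel

variable {α : Type*} [MeasurableSpace α]

structure IsGraphonKernel (W : α → α → ℝ) : Prop where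
  measurable : Measurable (uncurry W)
  symm : ∀ x y, W x y = W y x
  mem_Icc : ∀ x y, W x y ∈ Icc (0 : ℝ) 1

lemma IsGraphon.isGraphonKernel {g : ℝ → ℝ → ℝ} (hg : IsGraphon g) : IsGraphonKernel g :=
  ⟨hg.1, hg.2.1, hg.2.2⟩

noncomputable def degree (μ : Measure α) (W : α → α → ℝ) (x : α) : ℝ := ∫ y, W x y ∂μ

noncomputable def codegree (μ : Measure α) (W : α → α → ℝ) (x y : α) : ℝ :=
  ∫ z, W x z * W y z ∂μ

noncomputable def triangleDensityOn (μ : Measure α) (W : α → α → ℝ) : ℝ :=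
  ∫ x, ∫ y, ∫ z, W x y * W y z * W z x ∂μ ∂μ ∂μ

lemma integrable_of_mem_Icc {β : Type*} [MeasurableSpace β] {μ : Measure β} [IsFiniteMeasure μ]
    {f : β → ℝ} (hf : Measurable f) (h : ∀ x, f x ∈ Icc (0 : ℝ) 1) : Integrable f μ :=
  .of_bound hf.aestronglyMeasurable 1 <| ae_of_all _ fun x => by
    rw [Real.norm_of_nonneg (h x).1]; exact (h x).2

namespace IsGraphonKernel

variable {μ : Measure α} {W : α → α → ℝ}

lemma nonneg (hW : IsGraphonKernel W) (x y : α) : 0 ≤ W x y := (hW.mem_Icc x y).1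

lemma le_one (hW : IsGraphonKernel W) (x y : α) : W x y ≤ 1 := (hW.mem_Icc x y).2

lemma measurable_apply (hW : IsGraphonKernel W) (x : α) : Measurable (W x) :=
  hW.measurable.of_uncurry_left

lemma integrable_apply [IsFiniteMeasure μ] (hW : IsGraphonKernel W) (x : α) :
    Integrable (W x) μ :=
  integrable_of_mem_Icc (hW.measurable_apply x) (hW.mem_Icc x)

lemma integrable_mul_apply [IsFiniteMeasure μ] (hW : IsGraphonKernel W) (x y : α) :
    Integrable (fun z => W x z * W y z) μ :=
  integrable_of_mem_Icc ((hW.measurable_apply x).mul (hW.measurable_apply y))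
    fun z => unitInterval.mul_mem (hW.mem_Icc x z) (hW.mem_Icc y z)

lemma integrable_uncurry [IsFiniteMeasure μ] (hW : IsGraphonKernel W) :
    Integrable (fun q : α × α => W q.1 q.2) (μ.prod μ) :=
  integrable_of_mem_Icc hW.measurable fun q => hW.mem_Icc q.1 q.2

lemma measurable_degree [SFinite μ] (hW : IsGraphonKernel W) : Measurable (degree μ W) :=
  hW.measurable.stronglyMeasurable.integral_prod_right'.measurable

lemma degree_mem_Icc [IsProbabilityMeasure μ] (hW : IsGraphonKernel W) (x : α) :
    degree μ W x ∈ Icc (0 : ℝ) 1 :=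
  ⟨integral_nonneg (hW.nonneg x), by
    simpa [degree] using
      integral_mono (hW.integrable_apply x) (integrable_const (μ := μ) 1) (hW.le_one x)⟩

lemma measurable_codegree [SFinite μ] (hW : IsGraphonKernel W) :
    Measurable (uncurry (codegree μ W)) := by
  have h : Measurable fun p : (α × α) × α => W p.1.1 p.2 * W p.1.2 p.2 := by
    have := hW.measurable
    fun_prop
  exact h.stronglyMeasurable.integral_prod_right'.measurable

lemma integrable_mul_degree [IsProbabilityMeasure μ] (hW : IsGraphonKernel W) {f : α × α → α}
    (hf : Measurable f) : Integrable (fun q : α × α => W q.1 q.2 * degree μ W (f q)) (μ.prod μ) :=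
  integrable_of_mem_Icc (hW.measurable.mul (hW.measurable_degree.comp hf)) fun q =>
    unitInterval.mul_mem (hW.mem_Icc q.1 q.2) (hW.degree_mem_Icc (f q))

lemma integral_uncurry_eq_integral_degree [IsProbabilityMeasure μ] (hW : IsGraphonKernel W) :
    ∫ q, W q.1 q.2 ∂μ.prod μ = ∫ x, degree μ W x ∂μ :=
  integral_prod _ hW.integrable_uncurry

lemma ae_mul_codegree_eq_zero [IsProbabilityMeasure μ] (hW : IsGraphonKernel W)
    (ht : triangleDensityOn μ W = 0) :
    ∀ᵐ q ∂μ.prod μ, W q.1 q.2 * codegree μ W q.1 q.2 = 0 := by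
  set T : α × α × α → ℝ := fun p => W p.1 p.2.1 * W p.2.1 p.2.2 * W p.2.2 p.1
  have hT : Integrable T (μ.prod (μ.prod μ)) := by
    refine integrable_of_mem_Icc (by have := hW.measurable; fun_prop) fun p => ?_
    exact unitInterval.mul_mem (unitInterval.mul_mem (hW.mem_Icc _ _) (hW.mem_Icc _ _))
      (hW.mem_Icc _ _)
  have hT0 : T =ᵐ[μ.prod (μ.prod μ)] 0 := by
    refine (integral_eq_zero_iff_of_nonneg (fun p => ?_) hT).1 ?_
    · exact mul_nonneg (mul_nonneg (hW.nonneg _ _) (hW.nonneg _ _)) (hW.nonneg _ _)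
    rw [integral_prod _ hT, ← ht]
    refine integral_congr_ae ?_
    filter_upwards [hT.prod_right_ae] with x hx using integral_prod _ hx
  have hmeas : MeasurableSet {q : α × α | W q.1 q.2 * codegree μ W q.1 q.2 = 0} :=
    measurableSet_eq_fun (hW.measurable.mul hW.measurable_codegree) measurable_const
  rw [Measure.ae_prod_iff_ae_ae hmeas]
  filter_upwards [Measure.ae_ae_of_ae_prod hT0] with x hx
  filter_upwards [Measure.ae_ae_of_ae_prod hx] with y hy
  rw [codegree, ← integral_const_mul]
  refine integral_eq_zero_of_ae ?_
  filter_upwards [hy] with z hz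
  simp only [T, hW.symm z x, Pi.zero_apply] at hz ⊢
  linear_combination hz

lemma add_le_one_add_mul {a b : ℝ} (ha : a ∈ Icc (0 : ℝ) 1) (hb : b ∈ Icc (0 : ℝ) 1) :
    a + b ≤ 1 + a * b := by
  nlinarith [mul_nonneg (sub_nonneg.2 ha.2) (sub_nonneg.2 hb.2)]

lemma degree_add_degree_le [IsProbabilityMeasure μ] (hW : IsGraphonKernel W) (x y : α) :
    degree μ W x + degree μ W y ≤ 1 + codegree μ W x y := by
  have hxy := hW.integrable_mul_apply (μ := μ) x y
  calc degree μ W x + degree μ W y = ∫ z, (W x z + W y z) ∂μ :=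
        (integral_add (hW.integrable_apply x) (hW.integrable_apply y)).symm
    _ ≤ ∫ z, (1 + W x z * W y z) ∂μ :=
        integral_mono ((hW.integrable_apply x).add (hW.integrable_apply y))
          ((integrable_const 1).add hxy) fun z =>
            add_le_one_add_mul (hW.mem_Icc x z) (hW.mem_Icc y z)
    _ = 1 + codegree μ W x y := by
        rw [integral_add (integrable_const 1) hxy, integral_const, probReal_univ, one_smul]
        rfl

lemma integral_mul_degree_fst [IsProbabilityMeasure μ] (hW : IsGraphonKernel W) :
    ∫ q, W q.1 q.2 * degree μ W q.1 ∂μ.prod μ = ∫ x, degree μ W x ^ 2 ∂μ := by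
  rw [integral_prod _ (hW.integrable_mul_degree measurable_fst)]
  simp_rw [integral_mul_const, sq]
  rfl

lemma integral_mul_degree_snd [IsProbabilityMeasure μ] (hW : IsGraphonKernel W) :
    ∫ q, W q.1 q.2 * degree μ W q.2 ∂μ.prod μ = ∫ x, degree μ W x ^ 2 ∂μ := by
  rw [← hW.integral_mul_degree_fst, ← integral_prod_swap]
  simp_rw [Prod.fst_swap, Prod.snd_swap, hW.symm]

lemma two_mul_integral_degree_sq_le [IsProbabilityMeasure μ] (hW : IsGraphonKernel W)
    (ht : triangleDensityOn μ W = 0) :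
    2 * ∫ x, degree μ W x ^ 2 ∂μ ≤ ∫ x, degree μ W x ∂μ := by
  have h₁ := hW.integrable_mul_degree (μ := μ) measurable_fst
  have h₂ := hW.integrable_mul_degree (μ := μ) measurable_snd
  have hle : ∀ᵐ q ∂μ.prod μ,
      W q.1 q.2 * degree μ W q.1 + W q.1 q.2 * degree μ W q.2 ≤ W q.1 q.2 := by
    filter_upwards [hW.ae_mul_codegree_eq_zero ht] with q hq
    nlinarith [mul_le_mul_of_nonneg_left (hW.degree_add_degree_le (μ := μ) q.1 q.2)
      (hW.nonneg q.1 q.2)]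
  calc 2 * ∫ x, degree μ W x ^ 2 ∂μ
      = ∫ q, (W q.1 q.2 * degree μ W q.1 + W q.1 q.2 * degree μ W q.2) ∂μ.prod μ := by
        rw [integral_add h₁ h₂, hW.integral_mul_degree_fst, hW.integral_mul_degree_snd]
        ring
    _ ≤ ∫ q, W q.1 q.2 ∂μ.prod μ := integral_mono_ae (h₁.add h₂) hW.integrable_uncurry hle
    _ = ∫ x, degree μ W x ∂μ := hW.integral_uncurry_eq_integral_degree

lemma ae_degree_eq_half [IsProbabilityMeasure μ] (hW : IsGraphonKernel W)
    (ht : triangleDensityOn μ W = 0) (he : ∫ x, degree μ W x ∂μ = 1 / 2) :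
    ∀ᵐ x ∂μ, degree μ W x = 1 / 2 := by
  have hL2 : MemLp (degree μ W) 2 μ :=
    .of_bound hW.measurable_degree.aestronglyMeasurable 1 <| ae_of_all _ fun x => by
      rw [Real.norm_of_nonneg (hW.degree_mem_Icc x).1]; exact (hW.degree_mem_Icc x).2
  have hvar : variance (degree μ W) μ = 0 := by
    refine le_antisymm ?_ (variance_nonneg _ _)
    have := hW.two_mul_integral_degree_sq_le ht
    rw [variance_eq_sub hL2, he]
    simp only [Pi.pow_apply]
    linarith
  simpa only [he] using ae_eq_integral_of_variance_eq_zero hL2 hvar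

lemma ae_add_eq_one_of_ne_zero [IsProbabilityMeasure μ] (hW : IsGraphonKernel W)
    (ht : triangleDensityOn μ W = 0) (he : ∫ x, degree μ W x ∂μ = 1 / 2) :
    ∀ᵐ q ∂μ.prod μ, W q.1 q.2 ≠ 0 → ∀ᵐ z ∂μ, W q.1 z + W q.2 z = 1 := by
  have hd := hW.ae_degree_eq_half ht he
  filter_upwards [hW.ae_mul_codegree_eq_zero ht, Measure.quasiMeasurePreserving_fst.ae hd,
    Measure.quasiMeasurePreserving_snd.ae hd] with ⟨x, y⟩ hc hx hy hxy
  have hprod : ∀ᵐ z ∂μ, W x z * W y z = 0 :=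
    (integral_eq_zero_iff_of_nonneg (fun z => mul_nonneg (hW.nonneg x z) (hW.nonneg y z))
      (hW.integrable_mul_apply x y)).1 ((mul_eq_zero.1 hc).resolve_left hxy)
  have hle : (fun z => W x z + W y z) ≤ᵐ[μ] fun _ => 1 := by
    filter_upwards [hprod] with z hz
    linarith [add_le_one_add_mul (hW.mem_Icc x z) (hW.mem_Icc y z)]
  refine (integral_eq_iff_of_ae_le ((hW.integrable_apply x).add (hW.integrable_apply y))
    (integrable_const 1) hle).1 ?_
  rw [integral_add' (hW.integrable_apply x) (hW.integrable_apply y), integral_const,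
    probReal_univ, one_smul]
  change degree μ W x + degree μ W y = 1
  rw [hx, hy]
  norm_num

lemma ae_eq_completeBipartite_of_ae_rows [IsProbabilityMeasure μ] (hW : IsGraphonKernel W)
    {A : Set α} (hA : MeasurableSet A) (hμA : μ.real A = 1 / 2)
    (he : ∫ x, degree μ W x ∂μ = 1 / 2)
    (hrows : ∀ᵐ x ∂μ, x ∈ A → ∀ᵐ y ∂μ, W x y = completeBipartite A x y) :
    ∀ᵐ q ∂μ.prod μ, W q.1 q.2 = completeBipartite A q.1 q.2 := by
  have hB := measurable_completeBipartite hA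
  have hfst : ∀ᵐ q ∂μ.prod μ, q.1 ∈ A → W q.1 q.2 = completeBipartite A q.1 q.2 := by
    rw [Measure.ae_prod_iff_ae_ae (by have := hW.measurable; measurability)]
    filter_upwards [hrows] with x hx
    exact eventually_imp_distrib_left.2 hx
  have hsnd : ∀ᵐ q ∂μ.prod μ, q.2 ∈ A → W q.1 q.2 = completeBipartite A q.1 q.2 := by
    filter_upwards [Measure.measurePreserving_swap.quasiMeasurePreserving.ae hfst] with q hq
    simpa only [Prod.fst_swap, Prod.snd_swap, hW.symm q.2, completeBipartite_comm A q.2]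
      using hq
  have hle :
      (fun q : α × α => completeBipartite A q.1 q.2) ≤ᵐ[μ.prod μ] fun q => W q.1 q.2 := by
    filter_upwards [hfst, hsnd] with q h₁ h₂
    by_cases hq₁ : q.1 ∈ A
    · exact (h₁ hq₁).ge
    by_cases hq₂ : q.2 ∈ A
    · exact (h₂ hq₂).ge
    rw [completeBipartite_of_notMem_of_notMem hq₁ hq₂]
    exact hW.nonneg _ _
  refine ((integral_eq_iff_of_ae_le (integrable_of_mem_Icc hB fun q => ?_)
    hW.integrable_uncurry hle).1 ?_).symm
  · exact completeBipartite_mem_Icc A q.1 q.2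
  rw [integral_completeBipartite hA, hW.integral_uncurry_eq_integral_degree, he, hμA]
  norm_num

lemma exists_ae_eq_completeBipartite [IsProbabilityMeasure μ] (hW : IsGraphonKernel W)
    (h01 : ∀ᵐ q ∂μ.prod μ, W q.1 q.2 = 0 ∨ W q.1 q.2 = 1)
    (ht : triangleDensityOn μ W = 0) (he : ∫ x, degree μ W x ∂μ = 1 / 2) :
    ∃ A, MeasurableSet A ∧ μ.real A = 1 / 2 ∧
      ∀ᵐ q ∂μ.prod μ, W q.1 q.2 = completeBipartite A q.1 q.2 := by
  obtain ⟨x₀, hd, h01x, hadj⟩ := ((hW.ae_degree_eq_half ht he).and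
    ((Measure.ae_ae_of_ae_prod h01).and
      (Measure.ae_ae_of_ae_prod (hW.ae_add_eq_one_of_ne_zero ht he)))).exists
  set A := {y | W x₀ y ≠ 0}
  have hA : MeasurableSet A := hW.measurable_apply x₀ (measurableSet_singleton 0).compl
  have hrow : W x₀ =ᵐ[μ] A.indicator 1 := by
    filter_upwards [h01x] with y hy
    rcases hy with hy | hy <;> simp [A, hy]
  have hμA : μ.real A = 1 / 2 := by
    rw [← hd, degree, integral_congr_ae hrow, integral_indicator_one hA]
  refine ⟨A, hA, hμA, hW.ae_eq_completeBipartite_of_ae_rows hA hμA he ?_⟩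
  filter_upwards [hadj] with y hy hyA
  filter_upwards [hy hyA, hrow] with z hz hz₀
  rw [completeBipartite_of_mem hyA, ← hz₀]
  linarith

end IsGraphonKernel

end GraphonKernel

section Rearrangement

lemma exists_eq_and_preimage_Iic_eq_Iic {F : ℝ → ℝ} (hF : Continuous F) (hFm : Monotone F)
    {a b s : ℝ} (ha : F a ≤ s) (hb : s < F b) : ∃ τ, F τ = s ∧ F ⁻¹' Iic s = Iic τ := by
  set L := F ⁻¹' Iic s
  have hbdd : BddAbove L := ⟨b, fun t ht => (hFm.reflect_lt (lt_of_le_of_lt ht hb)).le⟩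
  have hτ : sSup L ∈ L := (isClosed_Iic.preimage hF).csSup_mem ⟨a, ha⟩ hbdd
  refine ⟨sSup L, le_antisymm hτ ?_, Subset.antisymm (fun t ht => le_csSup hbdd ht)
    fun t ht => (hFm ht).trans hτ⟩
  obtain ⟨c, -, hc⟩ := intermediate_value_Icc (hFm.reflect_lt (lt_of_le_of_lt ha hb)).le
    hF.continuousOn ⟨ha, hb.le⟩
  exact hc ▸ hFm (le_csSup hbdd hc.le)

lemma Iic_inter_Icc {α : Type*} [LinearOrder α] (s a b : α) :
    Iic s ∩ Icc a b = Icc a (min s b) := by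
  ext t
  simp only [mem_inter_iff, mem_Iic, mem_Icc, le_min_iff]
  tauto

noncomputable def cumulativeVolume (A : Set ℝ) (t : ℝ) : ℝ := volume.real (A ∩ Iic t)

variable {A : Set ℝ}

lemma monotone_cumulativeVolume (hA : volume A ≠ ⊤) : Monotone (cumulativeVolume A) :=
  fun _ _ hst => measureReal_mono (inter_subset_inter_right _ (Iic_subset_Iic.2 hst))
    (measure_ne_top_of_subset inter_subset_left hA)

lemma cumulativeVolume_le (hA : volume A ≠ ⊤) (t : ℝ) : cumulativeVolume A t ≤ volume.real A :=
  measureReal_mono inter_subset_left hA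

lemma lipschitzWith_cumulativeVolume (hA : volume A ≠ ⊤) :
    LipschitzWith 1 (cumulativeVolume A) := by
  refine .of_le_add_mul 1 fun s t => ?_
  rw [NNReal.coe_one, one_mul]
  rcases le_total s t with hst | hts
  · linarith [monotone_cumulativeVolume hA hst, dist_nonneg (x := s) (y := t)]
  have hsub : A ∩ Iic s ⊆ (A ∩ Iic t) ∪ Ioc t s := fun x ⟨hxA, hxs⟩ =>
    (le_or_gt x t).imp (fun hxt => ⟨hxA, hxt⟩) fun hxt => ⟨hxt, hxs⟩
  calc cumulativeVolume A s ≤ volume.real (A ∩ Iic t) + volume.real (Ioc t s) :=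
        (measureReal_mono hsub (measure_union_ne_top
          (measure_ne_top_of_subset inter_subset_left hA) measure_Ioc_lt_top.ne)).trans
          (measureReal_union_le _ _)
    _ = cumulativeVolume A t + dist s t := by
        rw [Real.volume_real_Ioc_of_le hts, Real.dist_eq, abs_of_nonneg (sub_nonneg.2 hts)]
        rfl

lemma map_restrict_cumulativeVolume {l u : ℝ} (hA : A ⊆ Icc l u) :
    (volume.restrict A).map (cumulativeVolume A) = volume.restrict (Icc 0 (volume.real A)) := by
  have hfin : volume A ≠ ⊤ := measure_ne_top_of_subset hA measure_Icc_lt_top.ne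
  have hmono := monotone_cumulativeVolume hfin
  have : IsFiniteMeasure (volume.restrict A) := isFiniteMeasure_restrict.2 hfin
  refine Measure.ext_of_Iic _ _ fun s => ?_
  rw [Measure.map_apply hmono.measurable measurableSet_Iic,
    Measure.restrict_apply (hmono.measurable measurableSet_Iic),
    Measure.restrict_apply measurableSet_Iic]
  rcases lt_or_ge s 0 with hs | hs
  · have h₁ : cumulativeVolume A ⁻¹' Iic s = ∅ :=
      eq_empty_of_forall_notMem fun t ht => (hs.trans_le measureReal_nonneg).not_ge ht
    rw [h₁, empty_inter, Iic_inter_Icc,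
      Icc_eq_empty (not_le.2 ((min_le_left _ _).trans_lt hs)), measure_empty]
  rcases lt_or_ge s (volume.real A) with hsA | hsA
  · have hbelow : cumulativeVolume A (l - 1) ≤ s := by
      have : A ∩ Iic (l - 1) = ∅ :=
        eq_empty_of_forall_notMem fun t ht => by linarith [(hA ht.1).1, mem_Iic.1 ht.2]
      rw [cumulativeVolume, this, measureReal_empty]
      exact hs
    have habove : s < cumulativeVolume A u := by
      rwa [cumulativeVolume,
        inter_eq_self_of_subset_left (show A ⊆ Iic u from fun t ht => (hA ht).2)]
    obtain ⟨τ, hτ, hpre⟩ := exists_eq_and_preimage_Iic_eq_Iic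
      (lipschitzWith_cumulativeVolume hfin).continuous hmono hbelow habove
    rw [hpre, inter_comm, ← ofReal_measureReal (measure_ne_top_of_subset inter_subset_left hfin),
      Iic_inter_Icc, min_eq_left hsA.le, Real.volume_Icc, sub_zero]
    exact congrArg ENNReal.ofReal hτ
  · have h₁ : cumulativeVolume A ⁻¹' Iic s = univ :=
      eq_univ_of_forall fun t => (cumulativeVolume_le hfin t).trans hsA
    rw [h₁, univ_inter, Iic_inter_Icc, min_eq_right hsA, Real.volume_Icc, sub_zero,
      ofReal_measureReal hfin]

lemma map_restrict_add_cumulativeVolume {l u : ℝ} (hA : A ⊆ Icc l u) (c : ℝ) :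
    (volume.restrict A).map (fun x => c + cumulativeVolume A x) =
      volume.restrict (Icc c (c + volume.real A)) := by
  have hmono := monotone_cumulativeVolume (measure_ne_top_of_subset hA measure_Icc_lt_top.ne)
  have htrans := (measurePreserving_add_left volume c).restrict_preimage
    (measurableSet_Icc (a := c) (b := c + volume.real A))
  rw [preimage_const_add_Icc, sub_self, add_sub_cancel_left] at htrans
  rw [← htrans.map_eq, ← map_restrict_cumulativeVolume hA,
    Measure.map_map (measurable_const_add c) hmono.measurable]
  rfl

lemma ae_restrict_Icc_mem_Ioo (a b : ℝ) : ∀ᵐ t ∂volume.restrict (Icc a b), t ∈ Ioo a b := by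
  rw [← Measure.restrict_congr_set Ioo_ae_eq_Icc]
  exact ae_restrict_mem measurableSet_Ioo

lemma volume_restrict_Icc_add_Icc {a b c : ℝ} (hab : a ≤ b) (hbc : b ≤ c) :
    volume.restrict (Icc a b) + volume.restrict (Icc b c) = volume.restrict (Icc a c) := by
  rw [← Measure.restrict_congr_set (Ioc_ae_eq_Icc (a := b)), ← Measure.restrict_union
    (disjoint_left.2 fun t ht ht' => ht'.1.not_ge ht.2) measurableSet_Ioc,
    Icc_union_Ioc_eq_Icc hab hbc]

instance : IsProbabilityMeasure unitMeasure := ⟨by simp [unitMeasure]⟩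

lemma unitMeasure_restrict (hA : MeasurableSet A) :
    unitMeasure.restrict A = volume.restrict (A ∩ Icc 0 1) :=
  Measure.restrict_restrict hA

lemma unitMeasure_real (hA : MeasurableSet A) :
    unitMeasure.real A = volume.real (A ∩ Icc 0 1) :=
  measureReal_restrict_apply hA

lemma volume_inter_Icc_ne_top (A : Set ℝ) (a b : ℝ) : volume (A ∩ Icc a b) ≠ ⊤ :=
  measure_ne_top_of_subset inter_subset_right measure_Icc_lt_top.ne

open Classical in
noncomputable def sortingMap (A : Set ℝ) : ℝ → ℝ :=
  A.piecewise (cumulativeVolume (A ∩ Icc 0 1))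
    fun x => unitMeasure.real A + cumulativeVolume (Aᶜ ∩ Icc 0 1) x

lemma measurable_sortingMap (hA : MeasurableSet A) : Measurable (sortingMap A) :=
  (monotone_cumulativeVolume (volume_inter_Icc_ne_top A 0 1)).measurable.piecewise hA
    (measurable_const.add (monotone_cumulativeVolume (volume_inter_Icc_ne_top Aᶜ 0 1)).measurable)

lemma map_restrict_sortingMap (hA : MeasurableSet A) :
    (unitMeasure.restrict A).map (sortingMap A) =
      volume.restrict (Icc 0 (unitMeasure.real A)) := by
  classical
  unfold sortingMap
  rw [Measure.map_congr (piecewise_ae_eq_restrict hA), unitMeasure_restrict hA,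
    map_restrict_cumulativeVolume inter_subset_right, unitMeasure_real hA]

lemma map_restrict_compl_sortingMap (hA : MeasurableSet A) :
    (unitMeasure.restrict Aᶜ).map (sortingMap A) =
      volume.restrict (Icc (unitMeasure.real A) 1) := by
  classical
  unfold sortingMap
  rw [Measure.map_congr (piecewise_ae_eq_restrict_compl hA), unitMeasure_restrict hA.compl,
    map_restrict_add_cumulativeVolume inter_subset_right, ← unitMeasure_real hA.compl,
    probReal_compl_eq_one_sub hA, add_sub_cancel]

lemma measurePreserving_sortingMap (hA : MeasurableSet A) :
    MeasurePreserving (sortingMap A) unitMeasure unitMeasure := by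
  refine ⟨measurable_sortingMap hA, ?_⟩
  calc unitMeasure.map (sortingMap A)
      = (unitMeasure.restrict A + unitMeasure.restrict Aᶜ).map (sortingMap A) := by
        rw [Measure.restrict_add_restrict_compl hA]
    _ = volume.restrict (Icc 0 1) := by
        rw [Measure.map_add _ _ (measurable_sortingMap hA), map_restrict_sortingMap hA,
          map_restrict_compl_sortingMap hA,
          volume_restrict_Icc_add_Icc measureReal_nonneg measureReal_le_one]

lemma ae_sortingMap_lt_of_mem (hA : MeasurableSet A) : ∀ᵐ x ∂unitMeasure,
    (x ∈ A → sortingMap A x < unitMeasure.real A) ∧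
      (x ∉ A → unitMeasure.real A < sortingMap A x) := by
  have h₁ : ∀ᵐ x ∂unitMeasure.restrict A, sortingMap A x ∈ Ioo 0 (unitMeasure.real A) :=
    ae_of_ae_map (measurable_sortingMap hA).aemeasurable
      (map_restrict_sortingMap hA ▸ ae_restrict_Icc_mem_Ioo _ _)
  have h₂ : ∀ᵐ x ∂unitMeasure.restrict Aᶜ, sortingMap A x ∈ Ioo (unitMeasure.real A) 1 :=
    ae_of_ae_map (measurable_sortingMap hA).aemeasurable
      (map_restrict_compl_sortingMap hA ▸ ae_restrict_Icc_mem_Ioo _ _)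
  rw [ae_restrict_iff' hA] at h₁
  rw [ae_restrict_iff' hA.compl] at h₂
  filter_upwards [h₁, h₂] with x hx₁ hx₂
  exact ⟨fun hx => (hx₁ hx).2, fun hx => (hx₂ hx).1⟩

end Rearrangement

lemma bipOne_eq_completeBipartite {A : Set ℝ} {x y s t : ℝ}
    (hx : (x ∈ A → s < 1 / 2) ∧ (x ∉ A → 1 / 2 < s))
    (hy : (y ∈ A → t < 1 / 2) ∧ (y ∉ A → 1 / 2 < t)) :
    bipOne s t = completeBipartite A x y := by
  by_cases hxA : x ∈ A <;> by_cases hyA : y ∈ A <;>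
    simp [bipOne, completeBipartite, hxA, hyA] at hx hy ⊢ <;> grind

/-- a `{0,1}`-valued triangle-free graphon of edge density `1/2`
    is equivalent to the complete balanced bipartite graphon. -/
theorem bipartite_rigidity (g : ℝ → ℝ → ℝ) (hg : IsGraphon g)
    (h01 : ∀ᵐ q ∂(unitMeasure.prod unitMeasure), g q.1 q.2 = 0 ∨ g q.1 q.2 = 1)
    (hgt : triangleDensity g = 0) (hge : edgeDensity g = 1 / 2) :
    GraphonEquiv g bipOne := by
  obtain ⟨A, hA, hμA, hgA⟩ := hg.isGraphonKernel.exists_ae_eq_completeBipartite h01 hgt hge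
  have hσA := ae_sortingMap_lt_of_mem hA
  rw [hμA] at hσA
  refine ⟨id, sortingMap A, .id _, measurePreserving_sortingMap hA, ?_⟩
  filter_upwards [hgA, Measure.quasiMeasurePreserving_fst.ae hσA,
    Measure.quasiMeasurePreserving_snd.ae hσA] with q hq h₁ h₂
  rw [id, id, hq, bipOne_eq_completeBipartite h₁ h₂]
end

section
/- Fix e with 0 < e < 1/2. For ε ∈ (0, 2e) define c₁ = I₀''(ε)/2 + ε·[I₀'(2e−ε) − I₀'(ε)]/(2(e−ε)²), c₂ = I₀''(2e−ε)/2 + ε·[I₀'(2e−ε) − I₀'(ε)]/(2(e−ε)²), and c₃ = (2e−ε)·[I₀'(2e−ε) − I₀'(ε)]/(2(e−ε)²). Then there exists ε₀ > 0 such that for all ε ∈ (0, ε₀): c₁ > 0, c₂ > 1, c₃ > 0, and c₁·c₂ > c₃². -/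
open MeasureTheory Real Set Filter

/-! The coefficients `c₁, c₂` dominate `I₀''(ε)/2 ≥ 1/(4ε)` and `I₀''(2e-ε)/2 ≥ 1` respectively,
and `c₃ > 0` because `I₀'` is increasing. Since `I₀'(ε) ~ (log ε)/2`, `c₃ = O(log (1/ε))`, so
`√ε · c₃ → 0`; hence `c₃² < 1/(4ε) < c₁ < c₁ c₂` for small `ε`. -/

open Topology

lemma exists_pos_forall_of_eventually_nhdsGT_zero {p : ℝ → Prop}
    (h : ∀ᶠ x in 𝓝[>] 0, p x) : ∃ ε₀ > 0, ∀ ε : ℝ, 0 < ε → ε < ε₀ → p ε := by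
  obtain ⟨ε₀, hε₀, hp⟩ := (nhdsGT_basis (0 : ℝ)).eventually_iff.1 h
  exact ⟨ε₀, hε₀, fun ε h0 h1 => hp ⟨h0, h1⟩⟩

lemma I0d_strictMonoOn : StrictMonoOn I0d (Ioo 0 1) := by
  intro x ⟨hx0, _⟩ y ⟨_, hy1⟩ hxy
  have hlog : log x < log y := log_lt_log hx0 hxy
  have hlog_one_sub : log (1 - y) < log (1 - x) := log_lt_log (by linarith) (by linarith)
  unfold I0d
  linarith

lemma continuousAt_I0d {u : ℝ} (hu0 : u ≠ 0) (hu1 : u ≠ 1) : ContinuousAt I0d u := by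
  have : 1 - u ≠ 0 := sub_ne_zero.2 hu1.symm
  unfold I0d
  fun_prop (disch := assumption)

lemma one_le_I0dd_half {u : ℝ} (hu0 : 0 < u) (hu1 : u < 1) : 1 ≤ I0dd u / 2 := by
  have h : I0dd u / 2 = 1 / (4 * (u * (1 - u))) := by
    unfold I0dd
    field_simp [(sub_pos.2 hu1).ne']
    ring
  have hprod : 0 < u * (1 - u) := mul_pos hu0 (sub_pos.2 hu1)
  rw [h, le_div_iff₀ (by positivity)]
  nlinarith [sq_nonneg (2 * u - 1)]

lemma inv_four_mul_lt_I0dd_half {u : ℝ} (hu1 : u < 1) :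
    1 / (4 * u) < I0dd u / 2 := by
  have : 0 < 1 / (1 - u) := one_div_pos.2 (sub_pos.2 hu1)
  have h : 1 / (4 * u) = 1 / u / 4 := by ring
  unfold I0dd
  linarith

lemma tendsto_sqrt_mul_log_nhdsGT_zero : Tendsto (fun x => √x * log x) (𝓝[>] 0) (𝓝 0) := by
  refine (tendsto_log_mul_rpow_nhdsGT_zero one_half_pos).congr fun x => ?_
  rw [sqrt_eq_rpow, mul_comm]

lemma tendsto_sqrt_mul_I0d_nhdsGT_zero : Tendsto (fun x => √x * I0d x) (𝓝[>] 0) (𝓝 0) := by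
  have hlog_one_sub : Tendsto (fun x => √x * log (1 - x)) (𝓝[>] 0) (𝓝 0) := by
    have : ContinuousAt (fun x => √x * log (1 - x)) 0 := by
      have : (1 : ℝ) - 0 ≠ 0 := by norm_num
      fun_prop (disch := assumption)
    simpa using this.tendsto.mono_left nhdsWithin_le_nhds
  simpa [I0d, mul_div_assoc', mul_sub] using
    (tendsto_sqrt_mul_log_nhdsGT_zero.sub hlog_one_sub).div_const 2

lemma tendsto_sqrt_mul_mul_sub_I0d {f g : ℝ → ℝ} {a b : ℝ} (hf : Tendsto f (𝓝[>] 0) (𝓝 a))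
    (hg : Tendsto g (𝓝[>] 0) (𝓝 b)) :
    Tendsto (fun x => √x * (f x * (g x - I0d x))) (𝓝[>] 0) (𝓝 0) := by
  have hsqrt : Tendsto (fun x => √x) (𝓝[>] 0) (𝓝 0) := by
    simpa using continuous_sqrt.continuousAt.tendsto.mono_left (nhdsWithin_le_nhds (a := (0:ℝ)))
  have := hf.mul ((hsqrt.mul hg).sub tendsto_sqrt_mul_I0d_nhdsGT_zero)
  simp only [zero_mul, sub_zero, mul_zero] at this
  refine this.congr fun x => ?_
  ring

lemma eventually_sq_lt_I0dd_half {c : ℝ → ℝ} (hc : Tendsto (fun x => √x * c x) (𝓝[>] 0) (𝓝 0)) :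
    ∀ᶠ x in 𝓝[>] 0, c x ^ 2 < I0dd x / 2 := by
  filter_upwards [Ioo_mem_nhdsGT one_pos,
    hc.eventually (Ioo_mem_nhds (neg_lt_zero.2 one_half_pos) one_half_pos)]
    with x ⟨hx0, hx1⟩ ⟨hlt, hgt⟩
  have hsq : x * c x ^ 2 < 1 / 4 := by
    have : (√x * c x) ^ 2 < (1 / 2) ^ 2 := sq_lt_sq' hlt hgt
    rw [mul_pow, sq_sqrt hx0.le] at this
    linarith
  calc c x ^ 2 < 1 / (4 * x) := by rw [lt_div_iff₀ (by positivity)]; linarith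
    _ < I0dd x / 2 := inv_four_mul_lt_I0dd_half hx1

lemma tendsto_sqrt_mul_coeff_nhdsGT_zero {e : ℝ} (he0 : 0 < e) (he : e < 1 / 2) :
    Tendsto (fun ε => √ε * ((2 * e - ε) * (I0d (2 * e - ε) - I0d ε) / (2 * (e - ε) ^ 2)))
      (𝓝[>] 0) (𝓝 0) := by
  have hf : Tendsto (fun ε => (2 * e - ε) / (2 * (e - ε) ^ 2)) (𝓝[>] 0)
      (𝓝 ((2 * e - 0) / (2 * (e - 0) ^ 2))) := by
    have : 2 * (e - 0) ^ 2 ≠ 0 := by positivity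
    exact (ContinuousAt.tendsto (by fun_prop (disch := assumption))).mono_left nhdsWithin_le_nhds
  have hg : Tendsto (fun ε => I0d (2 * e - ε)) (𝓝[>] 0) (𝓝 (I0d (2 * e - 0))) :=
    ((continuousAt_I0d (by linarith) (by linarith)).comp (f := fun ε => 2 * e - ε)
      (by fun_prop)).tendsto.mono_left nhdsWithin_le_nhds
  exact (tendsto_sqrt_mul_mul_sub_I0d hf hg).congr fun ε => by ring

/-- positivity and positive-definiteness of the coefficients
    `c₁, c₂, c₃` in the second-variation estimate, for all small `ε`. -/
theorem coefficients_positive_definite (e : ℝ) (he0 : 0 < e) (he : e < 1 / 2) :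
    ∃ ε₀ > 0, ∀ ε : ℝ, 0 < ε → ε < ε₀ →
      (0 < I0dd ε / 2 + ε * (I0d (2 * e - ε) - I0d ε) / (2 * (e - ε) ^ 2)) ∧
      (1 < I0dd (2 * e - ε) / 2 + ε * (I0d (2 * e - ε) - I0d ε) / (2 * (e - ε) ^ 2)) ∧
      (0 < (2 * e - ε) * (I0d (2 * e - ε) - I0d ε) / (2 * (e - ε) ^ 2)) ∧
      ((2 * e - ε) * (I0d (2 * e - ε) - I0d ε) / (2 * (e - ε) ^ 2)) ^ 2 <
        (I0dd ε / 2 + ε * (I0d (2 * e - ε) - I0d ε) / (2 * (e - ε) ^ 2)) *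
        (I0dd (2 * e - ε) / 2 + ε * (I0d (2 * e - ε) - I0d ε) / (2 * (e - ε) ^ 2)) := by
  refine exists_pos_forall_of_eventually_nhdsGT_zero ?_
  filter_upwards [Ioo_mem_nhdsGT he0,
    eventually_sq_lt_I0dd_half (tendsto_sqrt_mul_coeff_nhdsGT_zero he0 he)] with ε ⟨hε0, hεe⟩ hsq
  have hu : 2 * e - ε ∈ Ioo 0 1 := ⟨by linarith, by linarith⟩
  set D := I0d (2 * e - ε) - I0d ε
  have hD : 0 < D := sub_pos.2 <| I0d_strictMonoOn ⟨hε0, by linarith⟩ hu (by linarith)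
  have hT : 0 < ε * D / (2 * (e - ε) ^ 2) := by positivity
  have hc₁ : 0 < I0dd ε / 2 + ε * D / (2 * (e - ε) ^ 2) := by
    linarith [sq_nonneg ((2 * e - ε) * D / (2 * (e - ε) ^ 2))]
  have hc₂ : 1 < I0dd (2 * e - ε) / 2 + ε * D / (2 * (e - ε) ^ 2) := by
    linarith [one_le_I0dd_half hu.1 hu.2]
  refine ⟨hc₁, hc₂, by have := hu.1; positivity, ?_⟩
  calc _ < I0dd ε / 2 := hsq
    _ < _ := by linarith
    _ < _ := lt_mul_right hc₁ hc₂
end
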